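/- Let g ~ qbl(k1, γ) with witness constant d, set k0 := ⌈log N / γ⌉, suppose N ≥ e^{γ k1} and ‖(g^{k0})'‖_∞ ≤ 2π k0, and let h be a good(δ̄, N_δ̄) bijection. Then there is a constant C, depending only on d and γ, such that E[ ‖ĝ^{k0} − g̃^{k0}‖₂² ] ≤ C·( k0·N_δ̄/N + k0³/N + δ̄²·k0³/N² ). -/

import Mathlib

open MeasureTheory ProbabilityTheory Finset

noncomputable section

/-- `t` is the vector of order statistics of `N` i.i.d. samples from the uniform
distribution on the interval `[0, b]`: there exist i.i.d. random variables `u i`,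
each uniformly distributed on `[0, b]`, such that for every `ω` the vector
`(t i ω)_i` is the monotone rearrangement of `(u i ω)_i`. -/
def IsUniformOrderStats {Ω : Type*} [MeasurableSpace Ω] (μ : Measure Ω) (b : ℝ)
    {N : ℕ} (t : Fin N → Ω → ℝ) : Prop :=
  ∃ u : Fin N → Ω → ℝ,
    (∀ i, Measurable (u i)) ∧
    iIndepFun u μ ∧
    (∀ i, Measure.map (u i) μ = (ENNReal.ofReal b)⁻¹ • volume.restrict (Set.Icc 0 b)) ∧
    ∀ ω, Monotone (fun i => t i ω) ∧ ∃ σ : Equiv.Perm (Fin N), ∀ i, t i ω = u (σ i) ω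

/-- A permutation `h` of `{1, …, N}` is `good(δ, Nδ)` if at most `Nδ` indices are
moved by more than `δ`. -/
def GoodPerm {N : ℕ} (δ Nδ : ℕ) (h : Equiv.Perm (Fin N)) : Prop :=
  (Finset.univ.filter fun i : Fin N => (δ : ℤ) < |(i.1 : ℤ) - ((h i).1 : ℤ)|).card ≤ Nδ

/-- The estimated `k`-th Fourier series coefficient from samples `s 1, …, s N`
(nominally placed at locations `i/N`): `(1/N) ∑_{i=1}^N s i · e^{-2πjki/N}`. -/
def dftCoeff (N : ℕ) (s : Fin N → ℂ) (k : ℤ) : ℂ :=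
  (N : ℂ)⁻¹ * ∑ i : Fin N, s i *
    Complex.exp (-(2 * (Real.pi : ℂ) * Complex.I * (k : ℂ) * ((i.1 : ℂ) + 1) / (N : ℂ)))

/-- The 1-periodic trigonometric polynomial `∑_{|k| ≤ k0} c k · e^{2πjkx}`. -/
def trigPoly (k0 : ℕ) (c : ℤ → ℂ) (x : ℝ) : ℂ :=
  ∑ k ∈ Finset.Icc (-(k0 : ℤ)) (k0 : ℤ), c k *
    Complex.exp (2 * (Real.pi : ℂ) * Complex.I * (k : ℂ) * (x : ℂ))


/-! For every sorted sample in `[0, 1]` the error is bounded deterministically. By Parseval it is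
the sum over `|k| ≤ k0` of the squared differences of the DFT coefficients; the `k = 0` term
vanishes because the mean is invariant under reordering, and each other term is at most
`(N⁻¹ ∑ᵢ |g(tᵢ) - g(t_{h i})|)²`. At most `N_δ̄` indices are moved by more than `δ̄`, contributing
at most `2` each. For the others, `g` is within `O(e^{-γ k0}) = O(1/N)` of `g^{k0}`, which is
`2π k0`-Lipschitz, and `|tᵢ - t_{h i}| ≤ t_{i+δ̄} - t_{i-δ̄}`, a window sum that telescopes to at
most `2δ̄`. Squaring the resulting bound `2 N_δ̄ + 4π k0 δ̄ + O(1)` gives the three terms. -/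

open Complex ComplexConjugate Real

theorem norm_cexp_two_pi_I_int_mul (k : ℤ) (x : ℝ) : ‖cexp (2 * π * I * k * x)‖ = 1 := by
  simp [Complex.norm_exp]

theorem integral_cexp_two_pi_I_int_mul (m : ℤ) :
    ∫ x in (0:ℝ)..1, cexp (2 * π * I * m * x) = if m = 0 then 1 else 0 := by
  split_ifs with hm
  · simp [hm]
  · have hc : 2 * π * I * m ≠ 0 := by simp [Real.pi_ne_zero, hm]
    rw [integral_exp_mul_complex hc, ofReal_one, mul_one, ofReal_zero, mul_zero, Complex.exp_zero,
      show 2 * π * I * m = m * (2 * π * I) by ring, exp_int_mul_two_pi_mul_I, sub_self, zero_div]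

theorem continuous_trigPoly (k0 : ℕ) (c : ℤ → ℂ) : Continuous (trigPoly k0 c) := by
  unfold trigPoly
  fun_prop

theorem differentiable_trigPoly (k0 : ℕ) (c : ℤ → ℂ) : Differentiable ℝ (trigPoly k0 c) := by
  unfold trigPoly
  fun_prop

theorem norm_trigPoly_sub_le {k0 : ℕ} {a : ℤ → ℂ} {L : ℝ}
    (hderiv : ∀ x, ‖deriv (trigPoly k0 a) x‖ ≤ L) (x y : ℝ) :
    ‖trigPoly k0 a x - trigPoly k0 a y‖ ≤ L * |x - y| := by
  simpa [Real.norm_eq_abs] using Convex.norm_image_sub_le_of_norm_deriv_le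
    (fun z _ => differentiable_trigPoly k0 a z) (fun z _ => hderiv z) convex_univ
    (Set.mem_univ y) (Set.mem_univ x)

theorem trigPoly_sub (k0 : ℕ) (c c' : ℤ → ℂ) (x : ℝ) :
    trigPoly k0 c x - trigPoly k0 c' x = trigPoly k0 (c - c') x := by
  simp only [trigPoly, ← sum_sub_distrib, ← sub_mul, Pi.sub_apply]

theorem trigPoly_mul_conj (k0 : ℕ) (c : ℤ → ℂ) (x : ℝ) :
    trigPoly k0 c x * conj (trigPoly k0 c x) = ∑ k ∈ Icc (-(k0:ℤ)) k0, ∑ l ∈ Icc (-(k0:ℤ)) k0,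
      c k * conj (c l) * cexp (2 * π * I * ((k - l : ℤ) : ℂ) * x) := by
  rw [trigPoly, map_sum, sum_mul_sum]
  refine sum_congr rfl fun k _ => sum_congr rfl fun l _ => ?_
  rw [map_mul, ← exp_conj, mul_mul_mul_comm, ← Complex.exp_add]
  simp only [map_mul, map_ofNat, conj_ofReal, conj_I, map_intCast, Int.cast_sub]
  ring_nf

theorem integral_norm_sq_trigPoly (k0 : ℕ) (c : ℤ → ℂ) :
    ∫ x in (0:ℝ)..1, ‖trigPoly k0 c x‖ ^ 2 = ∑ k ∈ Icc (-(k0:ℤ)) k0, ‖c k‖ ^ 2 := by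
  apply ofReal_injective
  rw [← intervalIntegral.integral_ofReal]
  push_cast
  simp_rw [← mul_conj', trigPoly_mul_conj]
  rw [intervalIntegral.integral_finsetSum fun k _ =>
    (by fun_prop : Continuous _).intervalIntegrable _ _]
  refine sum_congr rfl fun k hk => ?_
  rw [intervalIntegral.integral_finsetSum fun l _ =>
    (by fun_prop : Continuous _).intervalIntegrable _ _]
  simp_rw [intervalIntegral.integral_const_mul, integral_cexp_two_pi_I_int_mul, sub_eq_zero,
    mul_ite, mul_one, mul_zero, sum_ite_eq, if_pos hk]

theorem dftCoeff_sub (N : ℕ) (s s' : Fin N → ℂ) (k : ℤ) :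
    dftCoeff N s k - dftCoeff N s' k = dftCoeff N (s - s') k := by
  simp only [dftCoeff, ← mul_sub, ← sum_sub_distrib, ← sub_mul, Pi.sub_apply]

theorem norm_dftCoeff_le (N : ℕ) (s : Fin N → ℂ) (k : ℤ) :
    ‖dftCoeff N s k‖ ≤ (∑ i, ‖s i‖) / N := by
  rw [dftCoeff, norm_mul, norm_inv, Complex.norm_natCast, inv_mul_eq_div]
  gcongr
  refine (norm_sum_le _ _).trans (sum_le_sum fun i _ => ?_)
  rw [norm_mul, Complex.norm_exp]
  simp

theorem dftCoeff_comp_perm_zero (N : ℕ) (s : Fin N → ℂ) (σ : Equiv.Perm (Fin N)) :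
    dftCoeff N (s ∘ σ) 0 = dftCoeff N s 0 := by
  simp only [dftCoeff, Int.cast_zero, mul_zero, zero_mul, zero_div, neg_zero, Complex.exp_zero,
    mul_one, Function.comp_apply, Equiv.sum_comp σ s]

theorem integral_norm_sq_trigPoly_dftCoeff_sub_comp_perm_le (N k0 : ℕ) (s : Fin N → ℂ)
    (σ : Equiv.Perm (Fin N)) :
    ∫ x in (0:ℝ)..1, ‖trigPoly k0 (dftCoeff N s) x - trigPoly k0 (dftCoeff N (s ∘ σ)) x‖ ^ 2
      ≤ 2 * k0 * ((∑ i, ‖s i - s (σ i)‖) / N) ^ 2 := by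
  set S := Icc (-(k0:ℤ)) k0
  set c : ℤ → ℂ := dftCoeff N s - dftCoeff N (s ∘ σ)
  have hc : ∀ k, c k = dftCoeff N (s - s ∘ σ) k := dftCoeff_sub N s (s ∘ σ)
  have hc0 : c 0 = 0 := sub_eq_zero.2 (dftCoeff_comp_perm_zero N s σ).symm
  have hcard : (S.erase 0).card = 2 * k0 := by
    rw [card_erase_of_mem (by simp [S]), Int.card_Icc]
    omega
  simp_rw [trigPoly_sub, integral_norm_sq_trigPoly]
  rw [← sum_erase S (a := 0) (f := fun k => ‖c k‖ ^ 2) (by simp [hc0])]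
  calc ∑ k ∈ S.erase 0, ‖c k‖ ^ 2 ≤ ∑ k ∈ S.erase 0, ((∑ i, ‖s i - s (σ i)‖) / N) ^ 2 := by
        gcongr with k
        exact hc k ▸ norm_dftCoeff_le N _ k
    _ = 2 * k0 * ((∑ i, ‖s i - s (σ i)‖) / N) ^ 2 := by
        rw [sum_const, hcard, nsmul_eq_mul]
        push_cast
        ring

theorem hasSum_pow_natAbs {r : ℝ} (h0 : 0 ≤ r) (h1 : r < 1) :
    HasSum (fun k : ℤ => r ^ k.natAbs) ((1 + r) / (1 - r)) := by
  have hg := hasSum_geometric_of_lt_one h0 h1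
  have hneg : HasSum (fun n : ℕ => r ^ (-(n + 1 : ℤ)).natAbs) (r * (1 - r)⁻¹) := by
    refine (hg.mul_left r).congr_fun fun n => ?_
    rw [show (-(n + 1 : ℤ)).natAbs = n + 1 by omega, pow_succ']
  convert HasSum.of_nat_of_neg_add_one (f := fun k : ℤ => r ^ k.natAbs) (by simpa using hg) hneg
    using 1
  field_simp [(sub_pos.2 h1).ne']

theorem pow_natAbs_le_of_lt_natAbs {r : ℝ} (h0 : 0 ≤ r) {n : ℕ} {k : ℤ}
    (hk : n < k.natAbs) : r ^ k.natAbs ≤ r ^ n * (r ^ (k - n).natAbs + r ^ (k + n).natAbs) := by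
  rcases le_or_gt 0 k with hk0 | hk0
  · have : k.natAbs = n + (k - n).natAbs := by omega
    rw [this, pow_add]
    gcongr
    exact le_add_of_nonneg_right (by positivity)
  · have : k.natAbs = n + (k + n).natAbs := by omega
    rw [this, pow_add]
    gcongr
    exact le_add_of_nonneg_left (by positivity)

theorem norm_sub_trigPoly_le {γ d : ℝ} (hγ : 0 < γ) (hd : 0 ≤ d) {k1 k0 : ℕ} (hk : k1 ≤ k0)
    {a : ℤ → ℂ} {G : ℂ} {x : ℝ}
    (hsum : HasSum (fun k : ℤ => a k * cexp (2 * π * I * k * x)) G)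
    (ha : ∀ k : ℤ, (k1 : ℤ) ≤ |k| → ‖a k‖ ≤ d * rexp (-γ * (|k| : ℤ))) :
    ‖G - trigPoly k0 a x‖ ≤ 2 * d * rexp (-γ) ^ k0 * (1 + rexp (-γ)) / (1 - rexp (-γ)) := by
  set r := rexp (-γ)
  have hr0 : 0 ≤ r := (exp_pos _).le
  have hr1 : r < 1 := exp_lt_one_iff.2 (neg_neg_iff_pos.2 hγ)
  set S := Icc (-(k0:ℤ)) k0
  set f : ℤ → ℂ := fun k => a k * cexp (2 * π * I * k * x)
  have htail : HasSum ((↑S : Set ℤ)ᶜ.indicator f) (G - trigPoly k0 a x) := by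
    refine hasSum_subtype_iff_indicator.1 ((S.hasSum_compl_iff).2 ?_)
    rwa [trigPoly, sub_add_cancel]
  -- dominates the terms off `S`, and is summable over all of `ℤ` as a sum of two shifts
  have hbound : HasSum (fun k : ℤ => d * r ^ k0 * (r ^ (k - k0).natAbs + r ^ (k + k0).natAbs))
      (d * r ^ k0 * ((1 + r) / (1 - r) + (1 + r) / (1 - r))) :=
    (((Equiv.subRight (k0:ℤ)).hasSum_iff.2 (hasSum_pow_natAbs hr0 hr1)).add
      ((Equiv.addRight (k0:ℤ)).hasSum_iff.2 (hasSum_pow_natAbs hr0 hr1))).mul_left _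
  refine (htail.norm_le_of_bounded hbound fun k => ?_).trans_eq (by ring)
  by_cases hkS : k ∈ S
  · rw [Set.indicator_of_notMem (by simpa using hkS), norm_zero]
    positivity
  have hk0 : k0 < k.natAbs := by
    simp only [S, mem_Icc, not_and_or, not_le] at hkS
    omega
  rw [Set.indicator_of_mem (by simpa using hkS), norm_mul, norm_cexp_two_pi_I_int_mul, mul_one,
    mul_assoc]
  calc ‖a k‖ ≤ d * r ^ k.natAbs := by
        simpa [r, Int.cast_abs, ← Real.exp_nat_mul, mul_comm]
          using ha k (by rw [Int.abs_eq_natAbs]; omega)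
    _ ≤ d * (r ^ k0 * (r ^ (k - k0).natAbs + r ^ (k + k0).natAbs)) :=
        mul_le_mul_of_nonneg_left (pow_natAbs_le_of_lt_natAbs hr0 hk0) hd

theorem sum_range_sub_shift_le (T : ℤ → ℝ) (hT : ∀ j, T j ∈ Set.Icc 0 1) (c : ℤ) (w N : ℕ) :
    ∑ i ∈ range N, (T (i + c + w) - T (i + c)) ≤ w := by
  have hsplit : ∀ i : ℕ, T (i + c + w) - T (i + c)
      = ∑ m ∈ range w, (T (i + 1 + c + m) - T (i + c + m)) := fun i => by
    have := sum_range_sub (fun m : ℕ => T (i + c + m)) w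
    push_cast at this
    rw [add_zero] at this
    rw [← this]
    exact sum_congr rfl fun m _ => by ring_nf
  have hwindow : ∀ m : ℕ, ∑ i ∈ range N, (T (i + 1 + c + m) - T (i + c + m)) ≤ 1 := fun m => by
    have := sum_range_sub (fun i : ℕ => T (i + c + m)) N
    push_cast at this
    rw [this]
    linarith [(hT (N + c + m)).2, (hT (0 + c + m)).1]
  simp_rw [hsplit]
  rw [sum_comm]
  simpa using sum_le_sum fun m (_ : m ∈ range w) => hwindow m

theorem Monotone.exists_int_extension {N : ℕ} {t : Fin N → ℝ} (hmono : Monotone t) {s : Set ℝ}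
    (hs : ∀ i, t i ∈ s) (hN : 0 < N) :
    ∃ T : ℤ → ℝ, Monotone T ∧ (∀ j, T j ∈ s) ∧ ∀ i : Fin N, T i = t i := by
  refine ⟨fun j => t ⟨min j.toNat (N - 1), by omega⟩, fun j j' hj => hmono ?_, fun j => hs _,
    fun i => congrArg t (Fin.ext ?_)⟩
  · simp only [Fin.mk_le_mk]
    exact min_le_min_right _ (Int.toNat_le_toNat hj)
  · simp only [Int.toNat_natCast]
    omega

theorem Monotone.abs_sub_le_of_abs_sub_le {T : ℤ → ℝ} (hT : Monotone T) {i j : ℤ} {δ : ℕ}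
    (hij : |i - j| ≤ δ) : |T i - T j| ≤ T (i + δ) - T (i - δ) := by
  obtain ⟨hlo, hhi⟩ := abs_le.1 hij
  rw [abs_sub_le_iff]
  constructor <;> linarith [hT (show i - δ ≤ j by omega), hT (show j ≤ i + δ by omega),
    hT (show i - δ ≤ i by omega), hT (show i ≤ i + δ by omega)]

theorem norm_sub_le_of_approx_lipschitz {E : Type*} [SeminormedAddCommGroup E] {G P : ℝ → E}
    {τ L : ℝ} (hτ : ∀ x, ‖G x - P x‖ ≤ τ) (hP : ∀ x y, ‖P x - P y‖ ≤ L * |x - y|) (x y : ℝ) :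
    ‖G x - G y‖ ≤ L * |x - y| + 2 * τ :=
  calc ‖G x - G y‖ ≤ ‖G x - P x‖ + (‖P x - P y‖ + ‖P y - G y‖) :=
        (norm_sub_le_norm_sub_add_norm_sub _ _ _).trans
          (add_le_add_right (norm_sub_le_norm_sub_add_norm_sub _ _ _) _)
    _ ≤ τ + (L * |x - y| + τ) := by
        gcongr
        exacts [hτ x, hP x y, norm_sub_rev (G y) _ ▸ hτ y]
    _ = L * |x - y| + 2 * τ := by ring

theorem GoodPerm.min_card {N δ Nδ : ℕ} {h : Equiv.Perm (Fin N)} (hgood : GoodPerm δ Nδ h) :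
    GoodPerm δ (min Nδ N) h :=
  le_min hgood ((card_filter_le _ _).trans (card_fin N).le)

theorem sum_norm_sub_comp_perm_le {N δ Nδ : ℕ} {h : Equiv.Perm (Fin N)} (hgood : GoodPerm δ Nδ h)
    {t : Fin N → ℝ} (hmono : Monotone t) (hrange : ∀ i, t i ∈ Set.Icc 0 1) {G P : ℝ → ℂ}
    (hG : ∀ x, ‖G x‖ ≤ 1) {τ L : ℝ} (hτ : ∀ x, ‖G x - P x‖ ≤ τ)
    (hP : ∀ x y, ‖P x - P y‖ ≤ L * |x - y|) :
    ∑ i, ‖G (t i) - G (t (h i))‖ ≤ 2 * Nδ + 2 * L * δ + 2 * N * τ := by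
  have hτ0 : 0 ≤ τ := (norm_nonneg _).trans (hτ 0)
  have hL0 : 0 ≤ L := by simpa using (norm_nonneg _).trans (hP 1 0)
  rcases Nat.eq_zero_or_pos N with rfl | hN
  · simp only [univ_eq_empty, sum_empty, CharP.cast_eq_zero, mul_zero]
    positivity
  -- extended to `ℤ`, the windows `[i - δ, i + δ]` may run past both ends of the sample
  obtain ⟨T, hTmono, hTrange, hTt⟩ := hmono.exists_int_extension hrange hN
  set far : Fin N → Prop := fun i => (δ : ℤ) < |(i : ℤ) - (h i : ℤ)|
  have hpoint : ∀ i, ‖G (t i) - G (t (h i))‖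
      ≤ (if far i then 2 else 0) + L * (T (i + δ) - T (i - δ)) + 2 * τ := by
    intro i
    by_cases hfar : far i
    · have hwindow : 0 ≤ L * (T (i + δ) - T (i - δ)) :=
        mul_nonneg hL0 (sub_nonneg.2 (hTmono (by omega)))
      have := (norm_sub_le _ _).trans (add_le_add (hG (t i)) (hG (t (h i))))
      rw [if_pos hfar]
      linarith
    have hdist := hTmono.abs_sub_le_of_abs_sub_le (not_lt.1 hfar)
    rw [hTt, hTt] at hdist
    rw [if_neg hfar, zero_add]
    linarith [norm_sub_le_of_approx_lipschitz hτ hP (t i) (t (h i)),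
      mul_le_mul_of_nonneg_left hdist hL0]
  have hfar : ∑ i, (if far i then (2 : ℝ) else 0) ≤ 2 * Nδ := by
    rw [← sum_filter, sum_const, nsmul_eq_mul, mul_comm]
    gcongr
    exact_mod_cast hgood
  have htele : ∑ i : Fin N, (T (i + δ) - T (i - δ)) ≤ (2 * δ : ℕ) :=
    (Fin.sum_univ_eq_sum_range (fun i => T (i + δ) - T (i - δ)) N).trans_le <| by
      convert sum_range_sub_shift_le T hTrange (-δ) (2 * δ) N using 4 <;> push_cast <;> ring
  calc ∑ i, ‖G (t i) - G (t (h i))‖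
      ≤ ∑ i, ((if far i then 2 else 0) + L * (T (i + δ) - T (i - δ)) + 2 * τ) :=
        sum_le_sum fun i _ => hpoint i
    _ ≤ 2 * Nδ + L * (2 * δ : ℕ) + N * (2 * τ) := by
        rw [sum_add_distrib, sum_add_distrib, ← mul_sum, sum_const, card_univ, Fintype.card_fin,
          nsmul_eq_mul]
        gcongr
    _ = 2 * Nδ + 2 * L * δ + 2 * N * τ := by push_cast; ring

theorem two_mul_sq_div_le_of_le_min {N k0 δ Nδ n : ℕ} (hN : 0 < N) (hnNδ : n ≤ Nδ) (hnN : n ≤ N)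
    (c : ℝ) :
    2 * k0 * ((2 * n + 4 * π * k0 * δ + 2 * c) / N) ^ 2
      ≤ (24 + 96 * π ^ 2 + 24 * c ^ 2) * (k0 * Nδ / N + k0 ^ 3 / N + δ ^ 2 * k0 ^ 3 / N ^ 2) := by
  have hNR : (0:ℝ) < N := Nat.cast_pos.2 hN
  have hn2 : (n : ℝ) ^ 2 ≤ Nδ * N := by
    rw [sq]
    exact_mod_cast Nat.mul_le_mul hnNδ hnN
  have hk0 : (k0 : ℝ) ≤ k0 ^ 3 := by exact_mod_cast Nat.le_self_pow (by norm_num) k0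
  have hN2 : (N : ℝ) ≤ N ^ 2 := by nlinarith [(Nat.one_le_cast (α := ℝ)).2 hN]
  calc 2 * k0 * ((2 * n + 4 * π * k0 * δ + 2 * c) / N) ^ 2
      ≤ 2 * k0 * (3 * ((2 * n / N) ^ 2 + (4 * π * k0 * δ / N) ^ 2 + (2 * c / N) ^ 2)) := by
        gcongr
        simp only [add_div]
        nlinarith [sq_nonneg (2 * n / N - 4 * π * k0 * δ / N), sq_nonneg (2 * n / N - 2 * c / N),
          sq_nonneg (4 * π * k0 * δ / N - 2 * c / N)]
    _ = 24 * (k0 * n ^ 2 / N ^ 2) + 96 * π ^ 2 * (δ ^ 2 * k0 ^ 3 / N ^ 2)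
          + 24 * c ^ 2 * (k0 / N ^ 2) := by
        field_simp
        ring
    _ ≤ 24 * (k0 * Nδ / N) + 96 * π ^ 2 * (δ ^ 2 * k0 ^ 3 / N ^ 2)
          + 24 * c ^ 2 * (k0 ^ 3 / N) := by
        gcongr 24 * ?_ + _ + _ * ?_
        · rw [div_le_div_iff₀ (by positivity) hNR]
          nlinarith [mul_le_mul_of_nonneg_left hn2 (by positivity : (0:ℝ) ≤ k0 * N)]
        · exact div_le_div₀ (by positivity) hk0 hNR hN2
    _ ≤ (24 + 96 * π ^ 2 + 24 * c ^ 2)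
          * (k0 * Nδ / N + k0 ^ 3 / N + δ ^ 2 * k0 ^ 3 / N ^ 2) := by
        have hX : 0 ≤ (k0 * Nδ / N : ℝ) := by positivity
        have hY : 0 ≤ (k0 ^ 3 / N : ℝ) := by positivity
        have hZ : 0 ≤ (δ ^ 2 * k0 ^ 3 / N ^ 2 : ℝ) := by positivity
        nlinarith [mul_nonneg (sq_nonneg π) hX, mul_nonneg (sq_nonneg c) hX,
          mul_nonneg (sq_nonneg π) hY, mul_nonneg (sq_nonneg c) hZ]

theorem integral_norm_sq_misordering_le {N k0 δ Nδ : ℕ} (hN : 0 < N) {h : Equiv.Perm (Fin N)}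
    (hgood : GoodPerm δ Nδ h) {t : Fin N → ℝ} (hmono : Monotone t)
    (hrange : ∀ i, t i ∈ Set.Icc 0 1) {g : ℝ → ℂ} (hg : ∀ x, ‖g x‖ ≤ 1) {a : ℤ → ℂ} {c : ℝ}
    (htail : ∀ x, ‖g x - trigPoly k0 a x‖ ≤ c / N)
    (hderiv : ∀ x, ‖deriv (trigPoly k0 a) x‖ ≤ 2 * π * k0) :
    ∫ x in (0:ℝ)..1, ‖trigPoly k0 (dftCoeff N (fun i => g (t i))) x
        - trigPoly k0 (dftCoeff N (fun i => g (t (h i)))) x‖ ^ 2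
      ≤ (24 + 96 * π ^ 2 + 24 * c ^ 2)
        * (k0 * Nδ / N + k0 ^ 3 / N + δ ^ 2 * k0 ^ 3 / N ^ 2) := by
  have hsum := sum_norm_sub_comp_perm_le hgood.min_card hmono hrange hg htail
    (norm_trigPoly_sub_le hderiv)
  refine (integral_norm_sq_trigPoly_dftCoeff_sub_comp_perm_le N k0 (fun i => g (t i)) h).trans
    (le_trans ?_ (two_mul_sq_div_le_of_le_min hN (min_le_left Nδ N) (min_le_right Nδ N) c))
  gcongr
  refine hsum.trans_eq ?_
  field_simp
  ring

theorem IsUniformOrderStats.ae_monotone_and_mem_Icc {Ω : Type*} [MeasurableSpace Ω]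
    {μ : Measure Ω} {b : ℝ} {N : ℕ} {t : Fin N → Ω → ℝ} (ht : IsUniformOrderStats μ b t) :
    ∀ᵐ ω ∂μ, Monotone (fun i => t i ω) ∧ ∀ i, t i ω ∈ Set.Icc 0 b := by
  obtain ⟨u, hmeas, -, hmap, hsort⟩ := ht
  have hu : ∀ᵐ ω ∂μ, ∀ i, u i ω ∈ Set.Icc 0 b := ae_all_iff.2 fun i =>
    ae_of_ae_map (hmeas i).aemeasurable <| by
      rw [hmap i]
      exact Measure.ae_smul_measure (ae_restrict_mem measurableSet_Icc) _
  filter_upwards [hu] with ω hω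
  obtain ⟨hmono, σ, hσ⟩ := hsort ω
  exact ⟨hmono, fun i => hσ i ▸ hω (σ i)⟩

theorem le_ceil_log_div_of_exp_mul_le {γ x : ℝ} (hγ : 0 < γ) {k : ℕ} (h : rexp (γ * k) ≤ x) :
    k ≤ ⌈Real.log x / γ⌉₊ := by
  have hx : 0 < x := (exp_pos _).trans_le h
  have : (k : ℝ) ≤ Real.log x / γ := by
    rw [le_div_iff₀ hγ, mul_comm, Real.le_log_iff_exp_le hx]
    exact h
  exact_mod_cast this.trans (Nat.le_ceil _)

theorem exp_neg_pow_ceil_log_div_le {γ x : ℝ} (hγ : 0 < γ) (hx : 0 < x) :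
    rexp (-γ) ^ ⌈Real.log x / γ⌉₊ ≤ x⁻¹ := by
  have : Real.log x ≤ γ * ⌈Real.log x / γ⌉₊ := by
    rw [← div_le_iff₀' hγ]
    exact Nat.le_ceil _
  rw [← Real.exp_nat_mul, ← exp_log (inv_pos.2 hx), Real.log_inv, exp_le_exp]
  linarith

theorem misordering_error_bound_general (γ : ℝ) (hγ : 0 < γ) (d : ℝ) :
    ∃ C : ℝ, ∀ (k1 N : ℕ) (Ω : Type) [MeasurableSpace Ω] (μ : Measure Ω)
      [IsProbabilityMeasure μ] (t : Fin N → Ω → ℝ) (g : ℝ → ℂ) (a : ℤ → ℂ)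
      (h : Equiv.Perm (Fin N)) (δ Nδ : ℕ) (k0 : ℕ),
      IsUniformOrderStats μ 1 t →
      Function.Periodic g 1 →
      (∀ x : ℝ, ‖g x‖ < 1) →
      (∀ x : ℝ, HasSum (fun k : ℤ =>
        a k * Complex.exp (2 * (Real.pi : ℂ) * Complex.I * (k : ℂ) * (x : ℂ))) (g x)) →
      (∀ k : ℤ, (k1 : ℤ) ≤ |k| → ‖a k‖ ≤ d * Real.exp (-γ * (|k| : ℤ))) →
      GoodPerm δ Nδ h →
      k0 = ⌈Real.log N / γ⌉₊ →
      Real.exp (γ * k1) ≤ N →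
      (∀ x : ℝ, ‖deriv (trigPoly k0 a) x‖ ≤ 2 * Real.pi * k0) →
      (∫ ω, (∫ x in (0:ℝ)..1,
          ‖trigPoly k0 (dftCoeff N (fun i => g (t i ω))) x
            - trigPoly k0 (dftCoeff N (fun i => g (t (h i) ω))) x‖ ^ 2) ∂μ)
        ≤ C * ((k0 : ℝ) * Nδ / N + (k0 : ℝ) ^ 3 / N
            + (δ : ℝ) ^ 2 * (k0 : ℝ) ^ 3 / (N : ℝ) ^ 2) := by
  set r := rexp (-γ)
  set c := 2 * d * (1 + r) / (1 - r)
  refine ⟨24 + 96 * π ^ 2 + 24 * c ^ 2, ?_⟩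
  intro k1 N Ω _ μ _ t g a h δ Nδ k0 ht _ hg hsum ha hgood hk0 hN hderiv
  have hNR : 0 < (N : ℝ) := (exp_pos _).trans_le hN
  have hd : 0 ≤ d := (mul_nonneg_iff_of_pos_right (exp_pos _)).1
    ((norm_nonneg _).trans (ha k1 (le_abs_self _)))
  have hc : 0 ≤ c := div_nonneg (by positivity) (sub_nonneg.2 (exp_le_one_iff.2 (by linarith)))
  have htail : ∀ x, ‖g x - trigPoly k0 a x‖ ≤ c / N := fun x =>
    calc ‖g x - trigPoly k0 a x‖ ≤ c * r ^ k0 := (norm_sub_trigPoly_le hγ hd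
          (hk0 ▸ le_ceil_log_div_of_exp_mul_le hγ hN) (hsum x) ha).trans_eq (by ring)
      _ ≤ c / N := by
          rw [div_eq_mul_inv]
          exact mul_le_mul_of_nonneg_left (hk0 ▸ exp_neg_pow_ceil_log_div_le hγ hNR) hc
  refine (integral_mono_of_nonneg (ae_of_all _ fun ω => intervalIntegral.integral_nonneg
    zero_le_one fun x _ => by positivity) (integrable_const _) ?_).trans_eq
    (by rw [integral_const, probReal_univ, one_smul])
  filter_upwards [ht.ae_monotone_and_mem_Icc] with ω ⟨hmono, hrange⟩
  exact integral_norm_sq_misordering_le (Nat.cast_pos.1 hNR) hgood hmono hrange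
    (fun x => (hg x).le) htail hderiv

/-- Misordering error: for `g ~ qbl(k1, γ)` with witness `d`,
`k0 = ⌈log N / γ⌉`, `N ≥ e^{γ k1}`, `‖(g^{k0})'‖_∞ ≤ 2π k0`, and a `good(δ̄, N_δ̄)`
permutation `h`, there is `C = C(d, γ)` with
`E[‖ĝ^{k0} − g̃^{k0}‖₂²] ≤ C (k0 N_δ̄/N + k0³/N + δ̄² k0³/N²)`. -/
theorem misordering_error_bound (γ : ℝ) (hγ : 0 < γ) (d : ℝ) (hd : 0 ≤ d) :
    ∃ C : ℝ, ∀ (k1 N : ℕ) (Ω : Type) [MeasurableSpace Ω] (μ : Measure Ω)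
      [IsProbabilityMeasure μ] (t : Fin N → Ω → ℝ) (g : ℝ → ℂ) (a : ℤ → ℂ)
      (h : Equiv.Perm (Fin N)) (δ Nδ : ℕ) (k0 : ℕ),
      IsUniformOrderStats μ 1 t →
      Function.Periodic g 1 →
      (∀ x : ℝ, ‖g x‖ < 1) →
      (∀ x : ℝ, HasSum (fun k : ℤ =>
        a k * Complex.exp (2 * (Real.pi : ℂ) * Complex.I * (k : ℂ) * (x : ℂ))) (g x)) →
      (∀ k : ℤ, (k1 : ℤ) ≤ |k| → ‖a k‖ ≤ d * Real.exp (-γ * (|k| : ℤ))) →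
      GoodPerm δ Nδ h →
      k0 = ⌈Real.log N / γ⌉₊ →
      Real.exp (γ * k1) ≤ N →
      (∀ x : ℝ, ‖deriv (trigPoly k0 a) x‖ ≤ 2 * Real.pi * k0) →
      (∫ ω, (∫ x in (0:ℝ)..1,
          ‖trigPoly k0 (dftCoeff N (fun i => g (t i ω))) x
            - trigPoly k0 (dftCoeff N (fun i => g (t (h i) ω))) x‖ ^ 2) ∂μ)
        ≤ C * ((k0 : ℝ) * Nδ / N + (k0 : ℝ) ^ 3 / N
            + (δ : ℝ) ^ 2 * (k0 : ℝ) ^ 3 / (N : ℝ) ^ 2) :=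
  misordering_error_bound_general γ hγ d
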